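/- If A₁, A₂ are nearly convex subsets of a Euclidean space and B₁, B₂ are subsets with A₁ ≈ B₁ and A₂ ≈ B₂, then A₁ + A₂ is nearly convex and A₁ + A₂ ≈ B₁ + B₂. -/

import Mathlib

open Pointwise

variable {X : Type*} [NormedAddCommGroup X] [InnerProductSpace ℝ X] [FiniteDimensional ℝ X]

def NearlyEqual (A B : Set X) : Prop :=
  closure A = closure B ∧ intrinsicInterior ℝ A = intrinsicInterior ℝ B

def NearlyConvex (A : Set X) : Prop :=
  ∃ C : Set X, Convex ℝ C ∧ C ⊆ A ∧ A ⊆ closure C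

open Set Topology

/-! Inside the affine span of a convex set `C`, where `C` has nonempty interior, one sees that
every `A` with `C ⊆ A ⊆ closure C` has the same relative interior as `C`, and that `ri C` is
convex and dense in `C`. Hence a set `B ≈ A` with `C ⊆ A ⊆ closure C` lies between `ri C` and
`closure C`, so it is nearly convex, and a nearly convex set has the same relative interior as
its closure. Minkowski sums of nearly convex sets are nearly convex because
`closure C₁ + closure C₂ ⊆ closure (C₁ + C₂)`, and `closure (A₁ + A₂)` only depends on
`closure A₁` and `closure A₂`. So `A₁ + A₂` and `B₁ + B₂` are nearly convex sets with equal
closures, hence with equal relative interiors. -/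

section ClosureAdd

variable {G : Type*} [TopologicalSpace G] [Add G] [ContinuousAdd G]

theorem closure_add_closure_subset (s t : Set G) : closure s + closure t ⊆ closure (s + t) := by
  rintro _ ⟨a, ha, b, hb, rfl⟩
  exact map_mem_closure₂ continuous_add ha hb fun _ ha' _ hb' => add_mem_add ha' hb'

theorem closure_closure_add_closure (s t : Set G) :
    closure (closure s + closure t) = closure (s + t) :=
  (closure_minimal (closure_add_closure_subset s t) isClosed_closure).antisymm
    (closure_mono (add_subset_add subset_closure subset_closure))

end ClosureAdd

theorem intrinsicInterior_eq_interior_of_affineSpan_eq_top {𝕜 V P : Type*} [Ring 𝕜]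
    [AddCommGroup V] [Module 𝕜 V] [TopologicalSpace P] [AddTorsor V P] {s : Set P}
    (hs : affineSpan 𝕜 s = ⊤) : intrinsicInterior 𝕜 s = interior s := by
  have hopen : IsOpen (affineSpan 𝕜 s : Set P) := by
    rw [hs, AffineSubspace.top_coe]
    exact isOpen_univ
  have hval : IsOpenMap ((↑) : affineSpan 𝕜 s → P) := hopen.isOpenMap_subtype_val
  rw [intrinsicInterior, ← hval.preimage_interior_eq_interior_preimage continuous_subtype_val,
    image_preimage_eq_inter_range, Subtype.range_coe, hs, AffineSubspace.top_coe, inter_univ]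

theorem Convex.interior_eq_of_subset_of_subset_closure {E : Type*} [AddCommGroup E] [Module ℝ E]
    [TopologicalSpace E] [IsTopologicalAddGroup E] [ContinuousSMul ℝ E] {C A : Set E}
    (hC : Convex ℝ C) (hCint : (interior C).Nonempty) (hCA : C ⊆ A) (hAC : A ⊆ closure C) :
    interior A = interior C :=
  ((interior_mono hAC).trans_eq
    (hC.interior_closure_eq_interior_of_nonempty_interior hCint)).antisymm (interior_mono hCA)

section IntrinsicInterior

variable {E F : Type*} [NormedAddCommGroup E] [NormedSpace ℝ E]
  [NormedAddCommGroup F] [NormedSpace ℝ F]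

theorem AffineIsometry.intrinsicInterior_eq_image_interior_preimage (φ : F →ᵃⁱ[ℝ] E)
    {s : Set E} (hs : s ⊆ range φ) (hspan : affineSpan ℝ (φ ⁻¹' s) = ⊤) :
    intrinsicInterior ℝ s = φ '' interior (φ ⁻¹' s) := by
  conv_lhs => rw [← image_preimage_eq_of_subset hs]
  rw [φ.intrinsicInterior_image, intrinsicInterior_eq_interior_of_affineSpan_eq_top hspan]

theorem exists_affineIsometry_affineSpan_preimage_eq_top {s : Set E} (hs : s.Nonempty) :
    ∃ φ : (affineSpan ℝ s).direction →ᵃⁱ[ℝ] E, s ⊆ range φ ∧ affineSpan ℝ (φ ⁻¹' s) = ⊤ := by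
  obtain ⟨p, hp⟩ := hs
  set V := affineSpan ℝ s
  let p' : V := ⟨p, subset_affineSpan ℝ s hp⟩
  have : Nonempty V := ⟨p'⟩
  let φ : V.direction →ᵃⁱ[ℝ] E :=
    V.subtypeₐᵢ.comp (AffineIsometryEquiv.vaddConst ℝ p').toAffineIsometry
  have hrange : range φ = V := by
    rw [AffineIsometry.coe_comp, range_comp, AffineIsometryEquiv.coe_toAffineIsometry,
      (AffineIsometryEquiv.surjective _).range_eq, image_univ, AffineSubspace.coe_subtypeₐᵢ]
    exact Subtype.range_coe
  have hsφ : s ⊆ range φ := hrange ▸ subset_affineSpan ℝ s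
  refine ⟨φ, hsφ, eq_top_iff.2 fun v _ => ?_⟩
  have hmap : (affineSpan ℝ (φ ⁻¹' s)).map φ.toAffineMap = V := by
    rw [AffineSubspace.map_span, AffineIsometry.coe_toAffineMap, image_preimage_eq_of_subset hsφ]
  obtain ⟨w, hw, hwv⟩ : φ v ∈ ((affineSpan ℝ (φ ⁻¹' s)).map φ.toAffineMap : Set E) := by
    rw [hmap, ← hrange]
    exact mem_range_self v
  exact φ.injective hwv ▸ hw

variable {C A : Set E}

protected theorem Convex.intrinsicInterior (hC : Convex ℝ C) :
    Convex ℝ (intrinsicInterior ℝ C) := by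
  rcases C.eq_empty_or_nonempty with rfl | hne
  · rw [intrinsicInterior_empty]
    exact convex_empty
  obtain ⟨φ, hCφ, hspan⟩ := exists_affineIsometry_affineSpan_preimage_eq_top hne
  rw [φ.intrinsicInterior_eq_image_interior_preimage hCφ hspan]
  exact (hC.affine_preimage φ.toAffineMap).interior.affine_image φ.toAffineMap

variable [FiniteDimensional ℝ E]

theorem Convex.intrinsicInterior_eq_of_subset_of_subset_closure (hC : Convex ℝ C) (hCA : C ⊆ A)
    (hAC : A ⊆ closure C) : intrinsicInterior ℝ A = intrinsicInterior ℝ C := by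
  rcases C.eq_empty_or_nonempty with rfl | hne
  · rw [subset_empty_iff.1 (hAC.trans closure_empty.subset)]
  obtain ⟨φ, hCφ, hspanC⟩ := exists_affineIsometry_affineSpan_preimage_eq_top hne
  have hφ : IsClosedEmbedding φ := φ.isometry.isClosedEmbedding
  have hC' : Convex ℝ (φ ⁻¹' C) := hC.affine_preimage φ.toAffineMap
  have hAφ : A ⊆ range φ := hAC.trans (closure_minimal hCφ hφ.isClosed_range)
  have hA'C' : φ ⁻¹' A ⊆ closure (φ ⁻¹' C) := by
    rw [hφ.closure_eq_preimage_closure_image, image_preimage_eq_of_subset hCφ]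
    exact preimage_mono hAC
  have hspanA : affineSpan ℝ (φ ⁻¹' A) = ⊤ :=
    eq_top_iff.2 (hspanC ▸ affineSpan_mono ℝ (preimage_mono hCA))
  rw [φ.intrinsicInterior_eq_image_interior_preimage hAφ hspanA,
    φ.intrinsicInterior_eq_image_interior_preimage hCφ hspanC,
    hC'.interior_eq_of_subset_of_subset_closure
      (hC'.interior_nonempty_iff_affineSpan_eq_top.2 hspanC) (preimage_mono hCA) hA'C']

theorem Convex.closure_intrinsicInterior (hC : Convex ℝ C) :
    closure (intrinsicInterior ℝ C) = closure C := by
  rcases C.eq_empty_or_nonempty with rfl | hne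
  · rw [intrinsicInterior_empty]
  obtain ⟨φ, hCφ, hspan⟩ := exists_affineIsometry_affineSpan_preimage_eq_top hne
  have hφ : IsClosedEmbedding φ := φ.isometry.isClosedEmbedding
  have hC' : Convex ℝ (φ ⁻¹' C) := hC.affine_preimage φ.toAffineMap
  rw [φ.intrinsicInterior_eq_image_interior_preimage hCφ hspan, hφ.closure_image_eq,
    hC'.closure_interior_eq_closure_of_nonempty_interior
      (hC'.interior_nonempty_iff_affineSpan_eq_top.2 hspan),
    ← hφ.closure_image_eq, image_preimage_eq_of_subset hCφ]

end IntrinsicInterior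

namespace NearlyConvex

variable {E : Type*} [NormedAddCommGroup E] [InnerProductSpace ℝ E] {A B : Set E}

theorem add (hA : NearlyConvex A) (hB : NearlyConvex B) : NearlyConvex (A + B) := by
  obtain ⟨C, hC, hCA, hAC⟩ := hA
  obtain ⟨D, hD, hDB, hBD⟩ := hB
  exact ⟨C + D, hC.add hD, add_subset_add hCA hDB,
    (add_subset_add hAC hBD).trans (closure_add_closure_subset C D)⟩

variable [FiniteDimensional ℝ E]

theorem of_nearlyEqual (hA : NearlyConvex A) (h : NearlyEqual A B) : NearlyConvex B := by
  obtain ⟨C, hC, hCA, hAC⟩ := hA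
  refine ⟨intrinsicInterior ℝ C, hC.intrinsicInterior, ?_, ?_⟩
  · rw [← hC.intrinsicInterior_eq_of_subset_of_subset_closure hCA hAC, h.2]
    exact intrinsicInterior_subset
  · rw [hC.closure_intrinsicInterior]
    exact subset_closure.trans (h.1 ▸ closure_minimal hAC isClosed_closure)

theorem intrinsicInterior_closure (hA : NearlyConvex A) :
    intrinsicInterior ℝ (closure A) = intrinsicInterior ℝ A := by
  obtain ⟨C, hC, hCA, hAC⟩ := hA
  rw [hC.intrinsicInterior_eq_of_subset_of_subset_closure hCA hAC,
    hC.intrinsicInterior_eq_of_subset_of_subset_closure (hCA.trans subset_closure)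
      (closure_minimal hAC isClosed_closure)]

end NearlyConvex

theorem nearlyEqual_add (A₁ A₂ B₁ B₂ : Set X)
    (hA₁ : NearlyConvex A₁) (hA₂ : NearlyConvex A₂)
    (h₁ : NearlyEqual A₁ B₁) (h₂ : NearlyEqual A₂ B₂) :
    NearlyConvex (A₁ + A₂) ∧ NearlyEqual (A₁ + A₂) (B₁ + B₂) := by
  have hA : NearlyConvex (A₁ + A₂) := hA₁.add hA₂
  have hB : NearlyConvex (B₁ + B₂) := (hA₁.of_nearlyEqual h₁).add (hA₂.of_nearlyEqual h₂)
  have hclosure : closure (A₁ + A₂) = closure (B₁ + B₂) := by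
    rw [← closure_closure_add_closure, h₁.1, h₂.1, closure_closure_add_closure]
  refine ⟨hA, hclosure, ?_⟩
  rw [← hA.intrinsicInterior_closure, hclosure, hB.intrinsicInterior_closure]
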